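/- (Homotopy lemma, cone construction) Let h : ∂B₁ → A_Q(ℝⁿ) be Lipschitz and suppose |hᵢ(x₀) - hⱼ(x₀)| ≤ 6Q·Lip(h) for some fixed x₀ ∈ ∂B₁ and all pairs of indices i,j. Set P := h₁(x₀) and define f(x) = Σᵢ ⟦ |x|·hᵢ(x/|x|) + (1-|x|)·P ⟧ for x ∈ closed unit ball of ℝ^m. Then f extends h and Lip(f) ≤ 12 Q² Lip(h). -/
import Mathlib


/-- The Almgren distance between two (representatives of) unordered tuples. -/
noncomputable def GDist {n Q : ℕ}
    (P S : Fin Q → EuclideanSpace ℝ (Fin n)) : ℝ :=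
  ⨅ σ : Equiv.Perm (Fin Q), Real.sqrt (∑ i, ‖P i - S (σ i)‖ ^ 2)

lemma gdist_le_perm {n Q : ℕ} (P S : Fin Q → EuclideanSpace ℝ (Fin n))
    (σ : Equiv.Perm (Fin Q)) :
    GDist P S ≤ Real.sqrt (∑ i, ‖P i - S (σ i)‖ ^ 2) :=
  ciInf_le (Set.Finite.bddBelow (Set.finite_range _)) σ

lemma gdist_component {n Q : ℕ} (P S : Fin Q → EuclideanSpace ℝ (Fin n)) :
    ∃ σ : Equiv.Perm (Fin Q), ∀ i, ‖P i - S (σ i)‖ ≤ GDist P S := by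
  obtain ⟨σ, hσ⟩ := Finite.exists_min
    (fun σ : Equiv.Perm (Fin Q) => Real.sqrt (∑ i, ‖P i - S (σ i)‖ ^ 2))
  refine ⟨σ, fun i => ?_⟩
  have h1 : GDist P S = Real.sqrt (∑ i, ‖P i - S (σ i)‖ ^ 2) :=
    le_antisymm (gdist_le_perm P S σ) (le_ciInf hσ)
  rw [h1]
  have h2 : ‖P i - S (σ i)‖ ^ 2 ≤ ∑ j, ‖P j - S (σ j)‖ ^ 2 :=
    Finset.single_le_sum (f := fun j => ‖P j - S (σ j)‖ ^ 2)
      (fun j _ => sq_nonneg _) (Finset.mem_univ i)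
  calc ‖P i - S (σ i)‖ = Real.sqrt (‖P i - S (σ i)‖ ^ 2) :=
        (Real.sqrt_sq (norm_nonneg _)).symm
    _ ≤ _ := Real.sqrt_le_sqrt h2

lemma sqrt_sum_sq_le_sum {Q : ℕ} (c : Fin Q → ℝ) (hc : ∀ i, 0 ≤ c i) :
    Real.sqrt (∑ i, c i ^ 2) ≤ ∑ i, c i := by
  have h1 : ∑ i, c i ^ 2 ≤ (∑ i, c i) ^ 2 := by
    rw [sq, Finset.sum_mul]
    apply Finset.sum_le_sum
    intro i _
    have h2 : c i ≤ ∑ j, c j := Finset.single_le_sum (fun j _ => hc j) (Finset.mem_univ i)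
    nlinarith [hc i]
  calc Real.sqrt (∑ i, c i ^ 2) ≤ Real.sqrt ((∑ i, c i) ^ 2) := Real.sqrt_le_sqrt h1
    _ = ∑ i, c i := Real.sqrt_sq (Finset.sum_nonneg fun i _ => hc i)

/-- Homotopy lemma (cone construction): let `h : ∂B₁ ⊂ ℝᵐ → A_Q(ℝⁿ)` be Lipschitz with
constant `Lh` (given through a selection `H`), and suppose that at some `x₀ ∈ ∂B₁` all
values are close to each other: `|hᵢ(x₀) - hⱼ(x₀)| ≤ 6·Q·Lip(h)` for all `i, j`.
Set `P := h₁(x₀)` and let `f(x) = Σᵢ ⟦|x|·hᵢ(x/|x|) + (1-|x|)·P⟧` be the cone with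
vertex `Q⟦P⟧`.  Then `f` extends `h` to the closed unit ball and
`Lip(f) ≤ 12·Q²·Lip(h)`. -/
theorem homotopy_cone_construction (m n Q : ℕ) (hQ : 0 < Q)
    (H : EuclideanSpace ℝ (Fin m) → Fin Q → EuclideanSpace ℝ (Fin n))
    (Lh : ℝ) (hLh : 0 ≤ Lh)
    (hLip : ∀ x y : EuclideanSpace ℝ (Fin m),
      ‖x‖ = 1 → ‖y‖ = 1 → GDist (H x) (H y) ≤ Lh * ‖x - y‖)
    (x₀ : EuclideanSpace ℝ (Fin m)) (hx₀ : ‖x₀‖ = 1)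
    (hclose : ∀ i j : Fin Q, ‖H x₀ i - H x₀ j‖ ≤ 6 * Q * Lh) :
    ∀ f : EuclideanSpace ℝ (Fin m) → Fin Q → EuclideanSpace ℝ (Fin n),
      (∀ x i, f x i = ‖x‖ • H (‖x‖⁻¹ • x) i + (1 - ‖x‖) • H x₀ ⟨0, hQ⟩) →
      (∀ x, ‖x‖ = 1 → f x = H x) ∧
      (∀ x y : EuclideanSpace ℝ (Fin m), ‖x‖ ≤ 1 → ‖y‖ ≤ 1 →
        GDist (f x) (f y) ≤ 12 * (Q : ℝ) ^ 2 * Lh * ‖x - y‖) := by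
  intro f hf
  set P : EuclideanSpace ℝ (Fin n) := H x₀ ⟨0, hQ⟩ with hP
  constructor
  · intro x hx
    funext i
    rw [hf x i, hx]
    simp
  · intro x y hx hy
    have hQ1 : (1 : ℝ) ≤ Q := by exact_mod_cast hQ
    have hxy : (0 : ℝ) ≤ ‖x - y‖ := norm_nonneg _
    -- componentwise distance to the vertex
    have hHP : ∀ z : EuclideanSpace ℝ (Fin m), ‖z‖ = 1 →
        ∀ i, ‖H z i - P‖ ≤ (6 * Q + 2) * Lh := by
      intro z hz i
      obtain ⟨τ, hτ⟩ := gdist_component (H z) (H x₀)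
      have h1 : GDist (H z) (H x₀) ≤ Lh * ‖z - x₀‖ := hLip z x₀ hz hx₀
      have h2 : ‖z - x₀‖ ≤ 2 := by
        calc ‖z - x₀‖ ≤ ‖z‖ + ‖x₀‖ := norm_sub_le _ _
          _ = 2 := by rw [hz, hx₀]; norm_num
      have h3 : ‖H z i - H x₀ (τ i)‖ ≤ 2 * Lh := by
        have := hτ i
        nlinarith
      have h4 : ‖H x₀ (τ i) - P‖ ≤ 6 * Q * Lh := hclose (τ i) ⟨0, hQ⟩
      calc ‖H z i - P‖ ≤ ‖H z i - H x₀ (τ i)‖ + ‖H x₀ (τ i) - P‖ := by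
            have := norm_add_le (H z i - H x₀ (τ i)) (H x₀ (τ i) - P)
            simpa using this
        _ ≤ 2 * Lh + 6 * Q * Lh := add_le_add h3 h4
        _ = (6 * Q + 2) * Lh := by ring
    -- reduction: a uniform componentwise bound suffices
    have final : ∀ σ : Equiv.Perm (Fin Q),
        (∀ i, ‖f x i - f y (σ i)‖ ≤ (6 * Q + 4) * Lh * ‖x - y‖) →
        GDist (f x) (f y) ≤ 12 * (Q : ℝ) ^ 2 * Lh * ‖x - y‖ := by
      intro σ hσ
      have h1 : GDist (f x) (f y) ≤ Real.sqrt (∑ i, ‖f x i - f y (σ i)‖ ^ 2) :=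
        gdist_le_perm _ _ σ
      have h2 : Real.sqrt (∑ i, ‖f x i - f y (σ i)‖ ^ 2) ≤ ∑ i, ‖f x i - f y (σ i)‖ :=
        sqrt_sum_sq_le_sum _ (fun i => norm_nonneg _)
      have h3 : ∑ i, ‖f x i - f y (σ i)‖ ≤
          ∑ _i : Fin Q, ((6 * (Q : ℝ) + 4) * Lh * ‖x - y‖) :=
        Finset.sum_le_sum (fun i _ => hσ i)
      have h4 : ∑ _i : Fin Q, ((6 * (Q : ℝ) + 4) * Lh * ‖x - y‖) =
          (Q : ℝ) * ((6 * (Q : ℝ) + 4) * Lh * ‖x - y‖) := by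
        rw [Finset.sum_const, Finset.card_univ, Fintype.card_fin, nsmul_eq_mul]
      have key : (Q : ℝ) * (6 * (Q : ℝ) + 4) ≤ 12 * (Q : ℝ) ^ 2 := by nlinarith
      have h5 : (Q : ℝ) * ((6 * (Q : ℝ) + 4) * Lh * ‖x - y‖) ≤
          12 * (Q : ℝ) ^ 2 * Lh * ‖x - y‖ := by
        have hnn : 0 ≤ Lh * ‖x - y‖ := mul_nonneg hLh hxy
        calc (Q : ℝ) * ((6 * (Q : ℝ) + 4) * Lh * ‖x - y‖)
            = ((Q : ℝ) * (6 * (Q : ℝ) + 4)) * (Lh * ‖x - y‖) := by ring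
          _ ≤ (12 * (Q : ℝ) ^ 2) * (Lh * ‖x - y‖) :=
              mul_le_mul_of_nonneg_right key hnn
          _ = 12 * (Q : ℝ) ^ 2 * Lh * ‖x - y‖ := by ring
      linarith
    by_cases hxz : x = 0
    · -- x = 0
      have hfx : ∀ i, f x i = P := by
        intro i
        rw [hf x i, hxz]
        simp
      by_cases hyz : y = 0
      · apply final 1
        intro i
        have hfy : f y i = P := by rw [hf y i, hyz]; simp
        simp only [Equiv.Perm.coe_one, id_eq]
        rw [hfx i, hfy]
        simp
        positivity
      · -- x = 0, y ≠ 0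
        apply final 1
        intro i
        set yh : EuclideanSpace ℝ (Fin m) := ‖y‖⁻¹ • y with hyh
        have hyh1 : ‖yh‖ = 1 := norm_smul_inv_norm hyz
        have hy_eq : ‖y‖ • yh = y := by
          rw [hyh, smul_smul, mul_inv_cancel₀ (norm_ne_zero_iff.2 hyz), one_smul]
        have hdiff : f x i - f y ((1 : Equiv.Perm (Fin Q)) i) = ‖y‖ • (P - H yh i) := by
          simp only [Equiv.Perm.coe_one, id_eq]
          rw [hfx i, hf y i]
          module
        rw [hdiff, norm_smul, Real.norm_eq_abs, abs_of_nonneg (norm_nonneg y)]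
        have h1 : ‖P - H yh i‖ ≤ (6 * Q + 2) * Lh := by
          rw [norm_sub_rev]; exact hHP yh hyh1 i
        have h2 : ‖x - y‖ = ‖y‖ := by rw [hxz, zero_sub, norm_neg]
        rw [h2]
        have hny : (0 : ℝ) ≤ ‖y‖ := norm_nonneg _
        nlinarith [mul_nonneg hLh hny]
    · set xh : EuclideanSpace ℝ (Fin m) := ‖x‖⁻¹ • x with hxh
      have hxh1 : ‖xh‖ = 1 := norm_smul_inv_norm hxz
      have hx_eq : ‖x‖ • xh = x := by
        rw [hxh, smul_smul, mul_inv_cancel₀ (norm_ne_zero_iff.2 hxz), one_smul]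
      by_cases hyz : y = 0
      · -- x ≠ 0, y = 0
        apply final 1
        intro i
        have hfy : f y ((1 : Equiv.Perm (Fin Q)) i) = P := by
          simp only [Equiv.Perm.coe_one, id_eq]
          rw [hf y i, hyz]; simp
        have hdiff : f x i - f y ((1 : Equiv.Perm (Fin Q)) i) = ‖x‖ • (H xh i - P) := by
          rw [hfy, hf x i]
          module
        rw [hdiff, norm_smul, Real.norm_eq_abs, abs_of_nonneg (norm_nonneg x)]
        have h1 : ‖H xh i - P‖ ≤ (6 * Q + 2) * Lh := hHP xh hxh1 i
        have h2 : ‖x - y‖ = ‖x‖ := by rw [hyz, sub_zero]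
        rw [h2]
        have hnx : (0 : ℝ) ≤ ‖x‖ := norm_nonneg _
        nlinarith [mul_nonneg hLh hnx]
      · -- main case: x ≠ 0, y ≠ 0
        set yh : EuclideanSpace ℝ (Fin m) := ‖y‖⁻¹ • y with hyh
        have hyh1 : ‖yh‖ = 1 := norm_smul_inv_norm hyz
        have hy_eq : ‖y‖ • yh = y := by
          rw [hyh, smul_smul, mul_inv_cancel₀ (norm_ne_zero_iff.2 hyz), one_smul]
        obtain ⟨σ, hσ⟩ := gdist_component (H xh) (H yh)
        apply final σ
        intro i
        have hdiff : f x i - f y (σ i) =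
            ‖x‖ • (H xh i - H yh (σ i)) + (‖x‖ - ‖y‖) • (H yh (σ i) - P) := by
          rw [hf x i, hf y (σ i)]
          module
        have hbd : ‖f x i - f y (σ i)‖ ≤
            ‖x‖ * ‖H xh i - H yh (σ i)‖ + |‖x‖ - ‖y‖| * ‖H yh (σ i) - P‖ := by
          rw [hdiff]
          calc ‖_ + _‖ ≤ ‖‖x‖ • (H xh i - H yh (σ i))‖ + ‖(‖x‖ - ‖y‖) • (H yh (σ i) - P)‖ :=
                norm_add_le _ _
            _ = ‖x‖ * ‖H xh i - H yh (σ i)‖ + |‖x‖ - ‖y‖| * ‖H yh (σ i) - P‖ := by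
                rw [norm_smul, norm_smul, Real.norm_eq_abs, Real.norm_eq_abs,
                  abs_of_nonneg (norm_nonneg x)]
        -- first term
        have hGd : GDist (H xh) (H yh) ≤ Lh * ‖xh - yh‖ := hLip xh yh hxh1 hyh1
        have hcomp : ‖H xh i - H yh (σ i)‖ ≤ Lh * ‖xh - yh‖ := (hσ i).trans hGd
        have hscale : ‖x‖ * ‖xh - yh‖ ≤ 2 * ‖x - y‖ := by
          have e1 : ‖x‖ * ‖xh - yh‖ = ‖x - ‖x‖ • yh‖ := by
            rw [← norm_smul_of_nonneg (norm_nonneg x), smul_sub, hx_eq]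
          have e2 : ‖x - ‖x‖ • yh‖ ≤ ‖x - y‖ + ‖y - ‖x‖ • yh‖ := by
            have := norm_add_le (x - y) (y - ‖x‖ • yh)
            simpa using this
          have e3' : y - ‖x‖ • yh = (‖y‖ - ‖x‖) • yh := by
            rw [sub_smul, hy_eq]
          have e3 : ‖y - ‖x‖ • yh‖ = |‖y‖ - ‖x‖| := by
            rw [e3', norm_smul, Real.norm_eq_abs, hyh1, mul_one]
          have e4 : |‖y‖ - ‖x‖| ≤ ‖x - y‖ := by
            rw [norm_sub_rev]
            exact abs_norm_sub_norm_le y x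
          rw [e1]
          linarith [e2, e3 ▸ e4]
        have ht1 : ‖x‖ * ‖H xh i - H yh (σ i)‖ ≤ 2 * Lh * ‖x - y‖ := by
          calc ‖x‖ * ‖H xh i - H yh (σ i)‖ ≤ ‖x‖ * (Lh * ‖xh - yh‖) :=
                mul_le_mul_of_nonneg_left hcomp (norm_nonneg x)
            _ = Lh * (‖x‖ * ‖xh - yh‖) := by ring
            _ ≤ Lh * (2 * ‖x - y‖) := mul_le_mul_of_nonneg_left hscale hLh
            _ = 2 * Lh * ‖x - y‖ := by ring
        -- second term
        have ht2 : |‖x‖ - ‖y‖| * ‖H yh (σ i) - P‖ ≤ (6 * Q + 2) * Lh * ‖x - y‖ := by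
          have e4 : |‖x‖ - ‖y‖| ≤ ‖x - y‖ := abs_norm_sub_norm_le x y
          have e5 : ‖H yh (σ i) - P‖ ≤ (6 * Q + 2) * Lh := hHP yh hyh1 (σ i)
          calc |‖x‖ - ‖y‖| * ‖H yh (σ i) - P‖ ≤ ‖x - y‖ * ((6 * Q + 2) * Lh) :=
                mul_le_mul e4 e5 (norm_nonneg _) hxy
            _ = (6 * Q + 2) * Lh * ‖x - y‖ := by ring
        calc ‖f x i - f y (σ i)‖ ≤
              ‖x‖ * ‖H xh i - H yh (σ i)‖ + |‖x‖ - ‖y‖| * ‖H yh (σ i) - P‖ := hbd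
          _ ≤ 2 * Lh * ‖x - y‖ + (6 * Q + 2) * Lh * ‖x - y‖ := add_le_add ht1 ht2
          _ = (6 * Q + 4) * Lh * ‖x - y‖ := by ring
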